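/- Let E be a Polish space with Borel σ-algebra 𝓔 and U a compact metric space, let P^a(x,·) be a controlled transition kernel, and let R ⊆ R₁ be two concentric closed balls in E. Let u_n, u : E → U be Borel measurable controls with u_n(x) → u(x) for every x ∈ E, such that for every x ∈ E, sup_{B ∈ 𝓔} |Q^{u_n}(x,B) − Q^{u}(x,B)| → 0 as n → ∞. Assume (EC): sup_{x ∈ R} sup_v E_x^v[(τ_R)²] < ∞ with v ranging over {u_n : n ∈ ℕ} ∪ {u}. Let f_n : E → ℝ be a uniformly bounded sequence of Borel measurable functions with f_n(y) → f(y) for every y ∈ E. Then for every x ∈ R, E_x^{u_n}[Σ_{i=0}^{τ_R − 1} f_n(X_i)] → E_x^{u}[Σ_{i=0}^{τ_R − 1} f(X_i)] as n → ∞. -/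

import Mathlib

open MeasureTheory ProbabilityTheory Filter
open scoped ENNReal

/-- First hitting time of a set `B` by the path `ω` (`∞` if never hit). -/
noncomputable def hitTime {E : Type*} (B : Set E) (ω : ℕ → E) : ℕ∞ :=
  ⨅ (n : ℕ) (_ : ω n ∈ B), (n : ℕ∞)

/-- `τ_R = D_{R₁ᶜ} + D_R ∘ θ_{D_{R₁ᶜ}}`: first entrance time to `R` after first
leaving `R₁`. -/
noncomputable def tauR {E : Type*} (R R1 : Set E) (ω : ℕ → E) : ℕ∞ :=
  hitTime R1ᶜ ω + hitTime R (fun n => ω ((hitTime R1ᶜ ω).toNat + n))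

/-- Prepend a point to a path. -/
def prepend {E : Type*} (x : E) (ω : ℕ → E) : ℕ → E :=
  fun n => match n with
  | 0 => x
  | k + 1 => ω k

/-- `Pl` is the family of Ionescu–Tulcea laws `P_x` of the Markov chain with transition
kernel `Q` started at `x`: it is characterized by being a measurable family of
probability measures satisfying the one-step recursion
`P_x = (prepend x)_* ((Q x) bind Pl)`. -/
def IsPathLaw {E : Type*} [MeasurableSpace E] (Q : Kernel E E)
    (Pl : E → Measure (ℕ → E)) : Prop :=
  Measurable Pl ∧ (∀ x, IsProbabilityMeasure (Pl x)) ∧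
    ∀ x, Pl x = ((Q x).bind Pl).map (prepend x)

/-- The embedded kernel `Π(x,B) = P_x(τ_R < ∞, X_{τ_R} ∈ B)`, as a measure on `E`. -/
noncomputable def embMeas {E : Type*} [MeasurableSpace E] (R R1 : Set E)
    (Pl : E → Measure (ℕ → E)) (x : E) : Measure E :=
  ((Pl x).restrict {ω | tauR R R1 ω ≠ ⊤}).map (fun ω => ω ((tauR R R1 ω).toNat))

/-- `k`-th iterate of a measure-valued map (sub-Markov transition function):
`Π^0(x,·) = δ_x`, `Π^{k+1}(x,B) = ∫ Π^k(y,B) Π(x,dy)`. -/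
noncomputable def mIter {E : Type*} [MeasurableSpace E] (Pi0 : E → Measure E) :
    ℕ → E → Measure E
  | 0 => fun x => Measure.dirac x
  | k + 1 => fun x => (Pi0 x).bind (mIter Pi0 k)

/-- The kernel `Q^u(x,·) = P^{u(x)}(x,·)` of a Borel measurable control `u`. -/
noncomputable def Qctrl {E U : Type*} [MeasurableSpace E] [MeasurableSpace U]
    (P : Kernel (E × U) E) (u : E → U) (hu : Measurable u) : Kernel E E :=
  P.comap (fun x => (x, u x)) (measurable_id.prodMk hu)

/-- Total variation distance `sup_{B ∈ 𝓔} |μ(B) − ν(B)|`. -/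
noncomputable def tvDist {E : Type*} [MeasurableSpace E] (μ ν : Measure E) : ℝ :=
  ⨆ B : {B : Set E // MeasurableSet B}, |(μ B.1).toReal - (ν B.1).toReal|

/-!
Truncate the stopped sum at time `N`. As `τ_R` is a stopping time, the truncated sum only depends
on the first `N` steps of the path, and for bounded functionals of the first `N` steps convergence
of the expectations follows by induction on `N`: the Markov property at time one reduces it to
`∫ G_n dQ^{u_n}(x, ·) → ∫ G dQ^u(x, ·)` with `G_n → G` pointwise, which holds by total variation
convergence of the kernels and dominated convergence. By (EC) the truncation error is at most
`C E[τ_R²] / N`, uniformly in `n`, so the two limits can be interchanged.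
-/

open scoped Topology

section TotalVariation

variable {β : Type*} [MeasurableSpace β] {μ ν : Measure β} [IsProbabilityMeasure μ]
  [IsProbabilityMeasure ν]

lemma le_tvDist {B : Set β} (hB : MeasurableSet B) : |μ.real B - ν.real B| ≤ tvDist μ ν := by
  refine le_ciSup (f := fun B : {B : Set β // MeasurableSet B} =>
    |(μ B.1).toReal - (ν B.1).toReal|) ⟨1, ?_⟩ ⟨B, hB⟩
  rintro _ ⟨B, rfl⟩
  exact abs_sub_le_of_nonneg_of_le measureReal_nonneg measureReal_le_one
    measureReal_nonneg measureReal_le_one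

lemma integral_abs_rnDeriv_sub_le_two_mul_tvDist :
    ∫ b, |(μ.rnDeriv (μ + ν) b).toReal - (ν.rnDeriv (μ + ν) b).toReal| ∂(μ + ν)
      ≤ 2 * tvDist μ ν := by
  set d : β → ℝ := fun b => (μ.rnDeriv (μ + ν) b).toReal - (ν.rnDeriv (μ + ν) b).toReal
  have hμ : μ ≪ μ + ν := Measure.AbsolutelyContinuous.rfl.add_right ν
  have hν : ν ≪ μ + ν := (Measure.AbsolutelyContinuous.rfl.add_right μ).trans (by rw [add_comm])
  have hdm : Measurable d :=
    (Measure.measurable_rnDeriv _ _).ennreal_toReal.sub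
      (Measure.measurable_rnDeriv _ _).ennreal_toReal
  have hd : Integrable d (μ + ν) :=
    Measure.integrable_toReal_rnDeriv.sub Measure.integrable_toReal_rnDeriv
  have hset : ∀ s, ∫ b in s, d b ∂(μ + ν) = μ.real s - ν.real s := fun s => by
    rw [integral_sub Measure.integrable_toReal_rnDeriv.restrict
      Measure.integrable_toReal_rnDeriv.restrict, Measure.setIntegral_toReal_rnDeriv hμ,
      Measure.setIntegral_toReal_rnDeriv hν]
  have hpos : |μ.real {b | 0 ≤ d b} - ν.real {b | 0 ≤ d b}| ≤ tvDist μ ν :=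
    le_tvDist (measurableSet_le measurable_const hdm)
  have hneg : |μ.real {b | d b ≤ 0} - ν.real {b | d b ≤ 0}| ≤ tvDist μ ν :=
    le_tvDist (measurableSet_le hdm measurable_const)
  simp only [← Real.norm_eq_abs]
  rw [integral_norm_eq_pos_sub_neg hd, hset, hset]
  linarith [le_abs_self (μ.real {b | 0 ≤ d b} - ν.real {b | 0 ≤ d b}),
    neg_abs_le (μ.real {b | d b ≤ 0} - ν.real {b | d b ≤ 0})]

lemma abs_integral_sub_integral_le_two_mul_tvDist {g : β → ℝ} (hg : Measurable g) {M : ℝ}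
    (hM : ∀ b, |g b| ≤ M) : |∫ b, g b ∂μ - ∫ b, g b ∂ν| ≤ 2 * M * tvDist μ ν := by
  have hμ : μ ≪ μ + ν := Measure.AbsolutelyContinuous.rfl.add_right ν
  have hν : ν ≪ μ + ν := (Measure.AbsolutelyContinuous.rfl.add_right μ).trans (by rw [add_comm])
  set d : β → ℝ := fun b => (μ.rnDeriv (μ + ν) b).toReal - (ν.rnDeriv (μ + ν) b).toReal
  have hd : Integrable d (μ + ν) :=
    Measure.integrable_toReal_rnDeriv.sub Measure.integrable_toReal_rnDeriv
  have hg' : ∀ ρ : Measure β, [IsFiniteMeasure ρ] → Integrable g ρ := fun ρ _ =>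
    .of_bound hg.aestronglyMeasurable M (ae_of_all _ hM)
  have hM0 : 0 ≤ M := (abs_nonneg _).trans (hM (nonempty_of_isProbabilityMeasure μ).some)
  have hdiff : ∫ b, g b ∂μ - ∫ b, g b ∂ν = ∫ b, d b * g b ∂(μ + ν) := by
    rw [← integral_toReal_rnDeriv_mul hμ, ← integral_toReal_rnDeriv_mul hν,
      ← integral_sub ((integrable_toReal_rnDeriv_mul_iff hμ).2 (hg' μ))
        ((integrable_toReal_rnDeriv_mul_iff hν).2 (hg' ν))]
    simp only [d, sub_mul]
  calc |∫ b, g b ∂μ - ∫ b, g b ∂ν| = ‖∫ b, d b * g b ∂(μ + ν)‖ := by rw [hdiff, Real.norm_eq_abs]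
    _ ≤ ∫ b, |d b| * M ∂(μ + ν) :=
      norm_integral_le_of_norm_le (hd.abs.mul_const M) (ae_of_all _ fun b => by
        rw [norm_mul, Real.norm_eq_abs, Real.norm_eq_abs]
        exact mul_le_mul_of_nonneg_left (hM b) (abs_nonneg _))
    _ ≤ 2 * tvDist μ ν * M := by
      rw [integral_mul_const]
      exact mul_le_mul_of_nonneg_right integral_abs_rnDeriv_sub_le_two_mul_tvDist hM0
    _ = 2 * M * tvDist μ ν := by ring

end TotalVariation

lemma tendsto_integral_of_tendsto_tvDist {β : Type*} [MeasurableSpace β] {μ : ℕ → Measure β}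
    {μ' : Measure β} [∀ n, IsProbabilityMeasure (μ n)] [IsProbabilityMeasure μ']
    (hμ : Tendsto (fun n => tvDist (μ n) μ') atTop (𝓝 0)) {G : ℕ → β → ℝ} {G' : β → ℝ}
    (hG : ∀ n, Measurable (G n)) {M : ℝ} (hM : ∀ n b, |G n b| ≤ M)
    (hlim : ∀ b, Tendsto (fun n => G n b) atTop (𝓝 (G' b))) :
    Tendsto (fun n => ∫ b, G n b ∂μ n) atTop (𝓝 (∫ b, G' b ∂μ')) := by
  have hdom : Tendsto (fun n => ∫ b, G n b ∂μ') atTop (𝓝 (∫ b, G' b ∂μ')) :=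
    tendsto_integral_of_dominated_convergence (fun _ => M) (fun n => (hG n).aestronglyMeasurable)
      (integrable_const M) (fun n => ae_of_all _ (hM n)) (ae_of_all _ hlim)
  rw [tendsto_iff_dist_tendsto_zero] at hdom ⊢
  refine squeeze_zero (fun n => dist_nonneg) (fun n => ?_)
    (by simpa using (hμ.const_mul (2 * M)).add hdom)
  calc dist (∫ b, G n b ∂μ n) (∫ b, G' b ∂μ')
      ≤ dist (∫ b, G n b ∂μ n) (∫ b, G n b ∂μ') + dist (∫ b, G n b ∂μ') (∫ b, G' b ∂μ') :=
        dist_triangle _ _ _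
    _ ≤ 2 * M * tvDist (μ n) μ' + dist (∫ b, G n b ∂μ') (∫ b, G' b ∂μ') := by
      gcongr
      exact abs_integral_sub_integral_le_two_mul_tvDist (hG n) (hM n)

lemma DependsOn.of_tendsto {ι α β γ : Type*} [TopologicalSpace γ] [T2Space γ] {l : Filter β}
    [l.NeBot] {H : β → (ι → α) → γ} {H' : (ι → α) → γ} {s : Set ι}
    (hH : ∀ n, DependsOn (H n) s) (hlim : ∀ ω, Tendsto (fun n => H n ω) l (𝓝 (H' ω))) :
    DependsOn H' s :=
  fun _ _ h => tendsto_nhds_unique (hlim _) ((hlim _).congr fun n => (hH n h).symm)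

section PathLaw

variable {E : Type*}

lemma DependsOn.comp_prepend {γ : Type*} {H : (ℕ → E) → γ} {N : ℕ}
    (hH : DependsOn H (Set.Iio (N + 1))) (x : E) :
    DependsOn (fun ω => H (prepend x ω)) (Set.Iio N) := fun ω ω' h =>
  hH fun i hi => by
    cases i with
    | zero => rfl
    | succ j => exact h j (Nat.succ_lt_succ_iff.1 hi)

variable [MeasurableSpace E]

lemma measurable_prepend (x : E) : Measurable (prepend x) :=
  measurable_pi_lambda _ fun n => by
    cases n with
    | zero => exact measurable_const
    | succ k => exact measurable_pi_apply k

variable {Q : Kernel E E} {P : E → Measure (ℕ → E)}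

def IsPathLaw.kernel (hP : IsPathLaw Q P) : Kernel E (ℕ → E) := ⟨P, hP.1⟩

instance IsPathLaw.isMarkovKernel_kernel (hP : IsPathLaw Q P) : IsMarkovKernel hP.kernel :=
  ⟨hP.2.1⟩

lemma IsPathLaw.measurable_integral (hP : IsPathLaw Q P) {H : (ℕ → E) → ℝ} (hH : Measurable H) :
    Measurable fun x => ∫ ω, H ω ∂P x :=
  (hH.stronglyMeasurable.integral_kernel (κ := hP.kernel)).measurable

lemma IsPathLaw.integral_eq [IsMarkovKernel Q] (hP : IsPathLaw Q P) {H : (ℕ → E) → ℝ}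
    (hH : Measurable H) {M : ℝ} (hM : ∀ ω, |H ω| ≤ M) (x : E) :
    ∫ ω, H ω ∂P x = ∫ y, ∫ ω, H (prepend x ω) ∂P y ∂Q x := by
  have hPx : P x = ((hP.kernel ∘ₖ Q) x).map (prepend x) := hP.2.2 x
  rw [hPx, integral_map (measurable_prepend x).aemeasurable hH.aestronglyMeasurable,
    Kernel.integral_comp]
  · rfl
  · exact .of_bound (hH.comp (measurable_prepend x)).aestronglyMeasurable M
      (ae_of_all _ fun ω => hM _)

theorem tendsto_integral_of_dependsOn {κ : ℕ → Kernel E E} {κ' : Kernel E E}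
    [∀ n, IsMarkovKernel (κ n)] [IsMarkovKernel κ']
    (hκ : ∀ x, Tendsto (fun n => tvDist (κ n x) (κ' x)) atTop (𝓝 0))
    {P : ℕ → E → Measure (ℕ → E)} {P' : E → Measure (ℕ → E)}
    (hP : ∀ n, IsPathLaw (κ n) (P n)) (hP' : IsPathLaw κ' P') {N : ℕ}
    {H : ℕ → (ℕ → E) → ℝ} {H' : (ℕ → E) → ℝ} (hH : ∀ n, Measurable (H n)) {M : ℝ}
    (hM : ∀ n ω, |H n ω| ≤ M) (hdep : ∀ n, DependsOn (H n) (Set.Iio N))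
    (hlim : ∀ ω, Tendsto (fun n => H n ω) atTop (𝓝 (H' ω))) (x : E) :
    Tendsto (fun n => ∫ ω, H n ω ∂P n x) atTop (𝓝 (∫ ω, H' ω ∂P' x)) := by
  have := fun n y => (hP n).2.1 y
  have := hP'.2.1
  induction N generalizing H H' x with
  | zero =>
    have hconst : ∀ {F : (ℕ → E) → ℝ}, DependsOn F (Set.Iio 0) → ∀ ω, F ω = F (fun _ => x) :=
      fun hF _ => hF fun i hi => absurd hi (Nat.not_lt_zero i)
    simp only [integral_eq_const (ae_of_all _ (hconst (hdep _))),
      integral_eq_const (ae_of_all _ (hconst (DependsOn.of_tendsto hdep hlim)))]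
    exact hlim _
  | succ N ih =>
    have hH' : Measurable H' := measurable_of_tendsto_metrizable hH (tendsto_pi_nhds.2 hlim)
    have hM' : ∀ ω, |H' ω| ≤ M := fun ω => le_of_tendsto' (hlim ω).abs fun n => hM n ω
    simp only [(hP _).integral_eq (hH _) (hM _), hP'.integral_eq hH' hM']
    refine tendsto_integral_of_tendsto_tvDist (hκ x)
      (fun n => (hP n).measurable_integral ((hH n).comp (measurable_prepend x)))
      (M := M) (fun n y => ?_) fun y => ih (fun n => (hH n).comp (measurable_prepend x))
        (fun n ω => hM n _) (fun n => (hdep n).comp_prepend x) (fun ω => hlim _) y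
    simpa using norm_integral_le_of_norm_le_const (μ := P n y)
      (f := fun ω => H n (prepend x ω)) (ae_of_all _ fun ω => hM n _)

end PathLaw

section HittingTime

variable {E : Type*} {B R R1 : Set E}

lemma hitTime_eq_coe_iff {ω : ℕ → E} {a : ℕ} :
    hitTime B ω = a ↔ ω a ∈ B ∧ ∀ i < a, ω i ∉ B := by
  constructor
  · intro h
    have hle : ∀ i, ω i ∈ B → a ≤ i := fun i hi => by
      have : hitTime B ω ≤ i := iInf₂_le i hi
      rwa [h, Nat.cast_le] at this
    refine ⟨by_contra fun ha => ?_, fun i hi hB => (hle i hB).not_gt hi⟩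
    have : ((a + 1 : ℕ) : ℕ∞) ≤ hitTime B ω := le_iInf₂ fun i hi =>
      Nat.cast_le.2 ((hle i hi).lt_of_ne (by rintro rfl; exact ha hi))
    rw [h, Nat.cast_le] at this
    omega
  · rintro ⟨ha, hlt⟩
    exact le_antisymm (iInf₂_le a ha)
      (le_iInf₂ fun i hi => Nat.cast_le.2 (not_lt.1 fun h => hlt i h hi))

lemma dependsOn_hitTime_eq (a : ℕ) :
    DependsOn (fun ω : ℕ → E => hitTime B ω = a) (Set.Iic a) := fun ω ω' h => by
  have hB : ∀ i ≤ a, (ω i ∈ B ↔ ω' i ∈ B) := fun i hi => by rw [h i hi]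
  simp only [hitTime_eq_coe_iff, eq_iff_iff, hB a le_rfl]
  exact and_congr_right' (forall₂_congr fun i hi => not_congr (hB i hi.le))

lemma tauR_eq_coe_iff {ω : ℕ → E} {k : ℕ} :
    tauR R R1 ω = k ↔ ∃ a b, a + b = k ∧ hitTime R1ᶜ ω = a ∧
      hitTime R (fun n => ω (a + n)) = b := by
  unfold tauR
  cases h1 : hitTime R1ᶜ ω using ENat.recTopCoe with
  | top => simp
  | coe a =>
    cases h2 : hitTime R (fun n => ω (a + n)) using ENat.recTopCoe with
    | top => simp [h2]
    | coe b => simp [h2, ← Nat.cast_add, eq_comm]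

lemma dependsOn_tauR_eq (k : ℕ) :
    DependsOn (fun ω : ℕ → E => tauR R R1 ω = k) (Set.Iic k) := fun ω ω' h => by
  simp only [tauR_eq_coe_iff]
  refine propext (exists₂_congr fun a b => and_congr_right fun hab => and_congr ?_ ?_)
  · exact Iff.of_eq (dependsOn_hitTime_eq a fun i hi => h i (by simp at hi ⊢; omega))
  · exact Iff.of_eq (dependsOn_hitTime_eq b fun i hi => h (a + i) (by simp at hi ⊢; omega))

variable [MeasurableSpace E]

lemma measurable_hitTime (hB : MeasurableSet B) : Measurable (hitTime B) := by
  refine ENat.measurable_iff.2 fun a => ?_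
  simp only [Set.preimage, Set.mem_singleton_iff, hitTime_eq_coe_iff, Set.ofPred_and,
    Set.ofPred_forall]
  exact (measurable_pi_apply a hB).inter
    (.iInter fun i => .iInter fun _ => (measurable_pi_apply i hB).compl)

lemma measurable_tauR (hR : MeasurableSet R) (hR1 : MeasurableSet R1) :
    Measurable (tauR R R1) := by
  have hshift : Measurable fun p : (ℕ → E) × ℕ∞ =>
      p.2 + hitTime R (fun n => p.1 (p.2.toNat + n)) :=
    measurable_from_prod_countable_left fun a => (Measurable.of_discrete (f := (a + ·))).comp
      ((measurable_hitTime hR).comp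
        (measurable_pi_lambda (fun ω : ℕ → E => fun n => ω (a.toNat + n))
          fun n => measurable_pi_apply _))
  exact hshift.comp (measurable_id.prodMk (measurable_hitTime hR1.compl))

end HittingTime

section StoppedSum

variable {E : Type*} {t : (ℕ → E) → ℕ∞} {g : E → ℝ} {C : ℝ}

/-- Equals `0` when `t ω = ⊤`, since `ENat.toNat ⊤ = 0`. -/
def stoppedSum (t : (ℕ → E) → ℕ∞) (g : E → ℝ) (ω : ℕ → E) : ℝ :=
  ∑ i ∈ Finset.range (t ω).toNat, g (ω i)

def truncStoppedSum (t : (ℕ → E) → ℕ∞) (N : ℕ) (g : E → ℝ) (ω : ℕ → E) : ℝ :=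
  ∑ i ∈ Finset.range N with ((i : ℕ) : ℕ∞) < t ω, g (ω i)

lemma abs_truncStoppedSum_le (hg : ∀ y, |g y| ≤ C) (N : ℕ) (ω : ℕ → E) :
    |truncStoppedSum t N g ω| ≤ C * N := by
  have hC : 0 ≤ C := (abs_nonneg _).trans (hg (ω 0))
  calc |truncStoppedSum t N g ω| ≤ ∑ i ∈ Finset.range N with ((i : ℕ) : ℕ∞) < t ω, |g (ω i)| :=
        Finset.abs_sum_le_sum_abs _ _
    _ ≤ C * N := by
        grw [Finset.sum_le_card_nsmul _ _ C fun i _ => hg (ω i), nsmul_eq_mul, mul_comm,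
          Finset.card_filter_le, Finset.card_range]

lemma abs_stoppedSum_sub_truncStoppedSum_le {ω : ℕ → E} {m : ℕ} (hm : t ω = m)
    (hg : ∀ y, |g y| ≤ C) (N : ℕ) :
    |stoppedSum t g ω - truncStoppedSum t N g ω| ≤ C * (m - N : ℕ) := by
  have htrunc : truncStoppedSum t N g ω = ∑ i ∈ Finset.range (min m N), g (ω i) := by
    refine Finset.sum_congr (Finset.ext fun i => ?_) fun _ _ => rfl
    simp only [Finset.mem_filter, Finset.mem_range, hm, Nat.cast_lt]
    omega
  rw [stoppedSum, htrunc, hm, ENat.toNat_natCast]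
  rcases le_total m N with hmN | hNm
  · simp [min_eq_left hmN, Nat.sub_eq_zero_of_le hmN]
  · rw [min_eq_right hNm, ← Finset.sum_range_add_sum_Ico _ hNm, add_sub_cancel_left]
    calc |∑ i ∈ Finset.Ico N m, g (ω i)| ≤ ∑ i ∈ Finset.Ico N m, |g (ω i)| :=
          Finset.abs_sum_le_sum_abs _ _
      _ ≤ C * (m - N : ℕ) := by
          simpa [mul_comm] using
            Finset.sum_le_card_nsmul (Finset.Ico N m) _ C fun i _ => hg (ω i)

lemma ENat.coe_lt_iff_forall_ne {i : ℕ} {s : ℕ∞} : (i : ℕ∞) < s ↔ ∀ k ≤ i, s ≠ k := by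
  cases s using ENat.recTopCoe with
  | top => simp
  | coe m =>
    simp only [Nat.cast_lt, ne_eq, Nat.cast_inj]
    exact ⟨fun h k hk => by omega, fun h => by by_contra! hm; exact h m hm rfl⟩

lemma dependsOn_truncStoppedSum (ht : ∀ k : ℕ, DependsOn (fun ω => t ω = k) (Set.Iic k))
    (N : ℕ) (g : E → ℝ) : DependsOn (truncStoppedSum t N g) (Set.Iio N) := fun ω ω' h => by
  refine Finset.sum_congr (Finset.filter_congr fun i hi => ?_) fun i hi => ?_
  · simp only [ENat.coe_lt_iff_forall_ne]
    refine forall₂_congr fun k hk => not_congr (Iff.of_eq (ht k fun j hj => h j ?_))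
    simp only [Finset.mem_range, Set.mem_Iic, Set.mem_Iio] at hi hj ⊢
    omega
  · rw [h i (Finset.mem_range.1 (Finset.mem_filter.1 hi).1)]

variable [MeasurableSpace E]

lemma measurable_stoppedSum (ht : Measurable t) (hg : Measurable g) :
    Measurable (stoppedSum t g) := by
  have hsum : Measurable fun p : (ℕ → E) × ℕ => ∑ i ∈ Finset.range p.2, g (p.1 i) :=
    measurable_from_prod_countable_left fun k => by
      dsimp only
      exact Finset.measurable_fun_sum _ fun i _ => hg.comp (measurable_pi_apply i)
  exact hsum.comp (measurable_id.prodMk ((Measurable.of_discrete (f := ENat.toNat)).comp ht))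

lemma measurable_truncStoppedSum (ht : Measurable t) (hg : Measurable g) (N : ℕ) :
    Measurable (truncStoppedSum t N g) := by
  unfold truncStoppedSum
  simp only [Finset.sum_filter]
  exact Finset.measurable_sum _ fun i _ =>
    Measurable.ite (ht (.of_discrete : MeasurableSet (Set.Ioi (i : ℕ∞))))
      (hg.comp (measurable_pi_apply i)) measurable_const

variable {μ : Measure (ℕ → E)}

lemma natCast_mul_lintegral_abs_stoppedSum_sub_le (hfin : ∀ᵐ ω ∂μ, t ω ≠ ⊤)
    (hg : ∀ y, |g y| ≤ C) (N : ℕ) :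
    N * ∫⁻ ω, ENNReal.ofReal |stoppedSum t g ω - truncStoppedSum t N g ω| ∂μ
      ≤ ENNReal.ofReal C * ∫⁻ ω, (t ω : ℝ≥0∞) ^ 2 ∂μ := by
  rw [← lintegral_const_mul' _ _ (ENNReal.natCast_ne_top N),
    ← lintegral_const_mul' _ _ ENNReal.ofReal_ne_top]
  refine lintegral_mono_ae (hfin.mono fun ω hω => ?_)
  obtain ⟨m, hm⟩ := ENat.ne_top_iff_exists.1 hω
  have hC : 0 ≤ C := (abs_nonneg _).trans (hg (ω 0))
  have hNm : ((N * (m - N : ℕ) : ℕ) : ℝ) ≤ m ^ 2 := by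
    rcases le_total N m with h | h
    · exact_mod_cast (Nat.mul_le_mul h (Nat.sub_le m N)).trans_eq (sq m).symm
    · simp [Nat.sub_eq_zero_of_le h]
  have key : N * |stoppedSum t g ω - truncStoppedSum t N g ω| ≤ C * m ^ 2 :=
    calc N * |stoppedSum t g ω - truncStoppedSum t N g ω| ≤ N * (C * (m - N : ℕ)) := by
          gcongr
          exact abs_stoppedSum_sub_truncStoppedSum_le hm.symm hg N
      _ ≤ C * m ^ 2 := by
          push_cast at hNm
          nlinarith
  rw [← hm, ENat.toENNReal_coe, ← ENNReal.ofReal_natCast, ← ENNReal.ofReal_mul (by positivity),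
    ← ENNReal.ofReal_natCast, ← ENNReal.ofReal_pow (by positivity),
    ← ENNReal.ofReal_mul hC]
  exact ENNReal.ofReal_le_ofReal key

lemma natCast_mul_abs_integral_stoppedSum_sub_le [IsProbabilityMeasure μ] (ht : Measurable t)
    (hg : Measurable g) (hgC : ∀ y, |g y| ≤ C) {K : ℝ≥0∞}
    (hK : ∫⁻ ω, (t ω : ℝ≥0∞) ^ 2 ∂μ ≤ K) (hK_top : K ≠ ⊤) (N : ℕ) :
    N * |∫ ω, stoppedSum t g ω ∂μ - ∫ ω, truncStoppedSum t N g ω ∂μ| ≤ C * K.toReal := by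
  have hC : 0 ≤ C := (abs_nonneg _).trans (hgC ((nonempty_of_isProbabilityMeasure μ).some 0))
  rcases N.eq_zero_or_pos with rfl | hN
  · simpa using mul_nonneg hC ENNReal.toReal_nonneg
  have hfin : ∀ᵐ ω ∂μ, t ω ≠ ⊤ := by
    have ht2 : Measurable fun ω => (t ω : ℝ≥0∞) ^ 2 :=
      (Measurable.of_discrete (f := fun n : ℕ∞ => (n : ℝ≥0∞) ^ 2)).comp ht
    refine (ae_lt_top' ht2.aemeasurable (hK.trans_lt hK_top.lt_top).ne).mono fun ω h htop => ?_
    simp [htop] at h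
  set D := fun ω => stoppedSum t g ω - truncStoppedSum t N g ω
  have hD : N * ∫⁻ ω, ENNReal.ofReal |D ω| ∂μ ≤ ENNReal.ofReal C * K :=
    (natCast_mul_lintegral_abs_stoppedSum_sub_le hfin hgC N).trans (by gcongr)
  have hD_int : Integrable D μ := by
    refine ⟨((measurable_stoppedSum ht hg).sub
      (measurable_truncStoppedSum ht hg N)).aestronglyMeasurable, ?_⟩
    rw [hasFiniteIntegral_iff_norm]
    exact ENNReal.lt_top_of_mul_ne_top_right
      (hD.trans_lt (ENNReal.mul_lt_top ENNReal.ofReal_lt_top hK_top.lt_top)).ne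
      (by exact_mod_cast hN.ne')
  have hT_int : Integrable (truncStoppedSum t N g) μ :=
    .of_bound (measurable_truncStoppedSum ht hg N).aestronglyMeasurable (C * N)
      (ae_of_all _ (abs_truncStoppedSum_le hgC N))
  have hS_int : Integrable (stoppedSum t g) μ :=
    (hD_int.add hT_int).congr (ae_of_all _ fun ω => sub_add_cancel _ _)
  rw [← integral_sub hS_int hT_int]
  calc N * |∫ ω, D ω ∂μ| ≤ N * (∫⁻ ω, ENNReal.ofReal |D ω| ∂μ).toReal := by
        gcongr
        simpa using norm_integral_le_lintegral_norm D (μ := μ)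
    _ = (N * ∫⁻ ω, ENNReal.ofReal |D ω| ∂μ).toReal := by
        rw [ENNReal.toReal_mul, ENNReal.toReal_natCast]
    _ ≤ (ENNReal.ofReal C * K).toReal :=
        ENNReal.toReal_mono (ENNReal.mul_ne_top ENNReal.ofReal_ne_top hK_top) hD
    _ = C * K.toReal := by rw [ENNReal.toReal_mul, ENNReal.toReal_ofReal hC]

end StoppedSum

lemma tendstoUniformly_of_natCast_mul_dist_le {β : Type*} {F : ℕ → β → ℝ} {f : β → ℝ} {c : ℝ}
    (h : ∀ N x, N * dist (f x) (F N x) ≤ c) : TendstoUniformly F f atTop := by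
  rw [Metric.tendstoUniformly_iff]
  intro ε hε
  filter_upwards [tendsto_natCast_atTop_atTop.eventually_gt_atTop (c / ε)] with N hN x
  exact lt_of_mul_lt_mul_left ((h N x).trans_lt ((div_lt_iff₀ hε).1 hN)) (Nat.cast_nonneg N)

instance isMarkovKernel_Qctrl {E U : Type*} [MeasurableSpace E] [MeasurableSpace U]
    (P : Kernel (E × U) E) [IsMarkovKernel P] (u : E → U) (hu : Measurable u) :
    IsMarkovKernel (Qctrl P u hu) := by
  unfold Qctrl
  infer_instance

theorem stmt18_general {E U : Type*} [MetricSpace E]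
    [MeasurableSpace E] [BorelSpace E]
    [MeasurableSpace U]
    (P : Kernel (E × U) E) [IsMarkovKernel P]
    -- two concentric closed balls R ⊆ R₁
    (z : E) (r r1 : ℝ)
    (R R1 : Set E) (hR : R = Metric.closedBall z r) (hR1 : R1 = Metric.closedBall z r1)
    (un : ℕ → E → U) (u : E → U)
    (hun : ∀ n, Measurable (un n)) (hu : Measurable u)
    (htv : ∀ x, Tendsto
      (fun n => tvDist (Qctrl P (un n) (hun n) x) (Qctrl P u hu x)) atTop (nhds 0))
    -- the path laws of the controlled chains
    (Pln : ℕ → E → Measure (ℕ → E)) (Plu : E → Measure (ℕ → E))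
    (hPln : ∀ n, IsPathLaw (Qctrl P (un n) (hun n)) (Pln n))
    (hPlu : IsPathLaw (Qctrl P u hu) Plu)
    -- (EC)
    (hEC : ∃ C : ℝ≥0∞, C ≠ ⊤ ∧ ∀ x ∈ R,
      (∀ n, ∫⁻ ω, ((tauR R R1 ω : ℝ≥0∞)) ^ 2 ∂ (Pln n x) ≤ C) ∧
      ∫⁻ ω, ((tauR R R1 ω : ℝ≥0∞)) ^ 2 ∂ (Plu x) ≤ C)
    -- uniformly bounded Borel functions converging pointwise
    (fn : ℕ → E → ℝ) (f : E → ℝ) (C : ℝ)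
    (hfn : ∀ n, Measurable (fn n)) (hf : Measurable f)
    (hbd : ∀ n y, |fn n y| ≤ C)
    (hfconv : ∀ y, Tendsto (fun n => fn n y) atTop (nhds (f y))) :
    ∀ x ∈ R,
      Tendsto (fun n =>
          ∫ ω, (∑ i ∈ Finset.range ((tauR R R1 ω).toNat), fn n (ω i)) ∂ (Pln n x))
        atTop
        (nhds (∫ ω, (∑ i ∈ Finset.range ((tauR R R1 ω).toNat), f (ω i)) ∂ (Plu x))) := by
  intro x hx
  obtain ⟨K, hK_top, hK⟩ := hEC
  have := fun n => (hPln n).2.1 x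
  have := hPlu.2.1 x
  have hτ : Measurable (tauR R R1) := measurable_tauR
    (hR ▸ Metric.isClosed_closedBall.measurableSet) (hR1 ▸ Metric.isClosed_closedBall.measurableSet)
  have hfC : ∀ y, |f y| ≤ C := fun y => le_of_tendsto' (hfconv y).abs fun n => hbd n y
  have htrunc : ∀ N, Tendsto (fun n => ∫ ω, truncStoppedSum (tauR R R1) N (fn n) ω ∂Pln n x)
      atTop (𝓝 (∫ ω, truncStoppedSum (tauR R R1) N f ω ∂Plu x)) := fun N =>
    tendsto_integral_of_dependsOn htv hPln hPlu (fun n => measurable_truncStoppedSum hτ (hfn n) N)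
      (fun n => abs_truncStoppedSum_le (hbd n) N) (fun n => dependsOn_truncStoppedSum
        dependsOn_tauR_eq N (fn n)) (fun ω => tendsto_finsetSum _ fun i _ => hfconv (ω i)) x
  have htail : TendstoUniformly
      (fun N n => ∫ ω, truncStoppedSum (tauR R R1) N (fn n) ω ∂Pln n x)
      (fun n => ∫ ω, stoppedSum (tauR R R1) (fn n) ω ∂Pln n x) atTop :=
    tendstoUniformly_of_natCast_mul_dist_le fun N n =>
      natCast_mul_abs_integral_stoppedSum_sub_le hτ (hfn n) (hbd n) ((hK x hx).1 n) hK_top N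
  have htail_lim : Tendsto (fun N => ∫ ω, truncStoppedSum (tauR R R1) N f ω ∂Plu x) atTop
      (𝓝 (∫ ω, stoppedSum (tauR R R1) f ω ∂Plu x)) :=
    (tendstoUniformly_of_natCast_mul_dist_le (β := Unit) fun N _ =>
      natCast_mul_abs_integral_stoppedSum_sub_le hτ hf hfC (hK x hx).2 hK_top N).tendsto_at ()
  exact htail.tendsto_of_eventually_tendsto (.of_forall htrunc) htail_lim

/-- Proposition 5: under (EC) and total variation convergence of the
controlled kernels along `u_n → u`, for uniformly bounded Borel `f_n → f` pointwise,
`E_x^{u_n}[Σ_{i<τ_R} f_n(X_i)] → E_x^{u}[Σ_{i<τ_R} f(X_i)]` for every `x ∈ R`. -/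
theorem stmt18 {E U : Type*} [MetricSpace E] [PolishSpace E]
    [MeasurableSpace E] [BorelSpace E]
    [MetricSpace U] [CompactSpace U] [MeasurableSpace U] [BorelSpace U]
    (P : Kernel (E × U) E) [IsMarkovKernel P]
    -- two concentric closed balls R ⊆ R₁
    (z : E) (r r1 : ℝ) (hr : r ≤ r1)
    (R R1 : Set E) (hR : R = Metric.closedBall z r) (hR1 : R1 = Metric.closedBall z r1)
    (un : ℕ → E → U) (u : E → U)
    (hun : ∀ n, Measurable (un n)) (hu : Measurable u)
    (hconv : ∀ x, Tendsto (fun n => un n x) atTop (nhds (u x)))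
    (htv : ∀ x, Tendsto
      (fun n => tvDist (Qctrl P (un n) (hun n) x) (Qctrl P u hu x)) atTop (nhds 0))
    -- the path laws of the controlled chains
    (Pln : ℕ → E → Measure (ℕ → E)) (Plu : E → Measure (ℕ → E))
    (hPln : ∀ n, IsPathLaw (Qctrl P (un n) (hun n)) (Pln n))
    (hPlu : IsPathLaw (Qctrl P u hu) Plu)
    -- (EC)
    (hEC : ∃ C : ℝ≥0∞, C ≠ ⊤ ∧ ∀ x ∈ R,
      (∀ n, ∫⁻ ω, ((tauR R R1 ω : ℝ≥0∞)) ^ 2 ∂ (Pln n x) ≤ C) ∧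
      ∫⁻ ω, ((tauR R R1 ω : ℝ≥0∞)) ^ 2 ∂ (Plu x) ≤ C)
    -- uniformly bounded Borel functions converging pointwise
    (fn : ℕ → E → ℝ) (f : E → ℝ) (C : ℝ)
    (hfn : ∀ n, Measurable (fn n)) (hf : Measurable f)
    (hbd : ∀ n y, |fn n y| ≤ C)
    (hfconv : ∀ y, Tendsto (fun n => fn n y) atTop (nhds (f y))) :
    ∀ x ∈ R,
      Tendsto (fun n =>
          ∫ ω, (∑ i ∈ Finset.range ((tauR R R1 ω).toNat), fn n (ω i)) ∂ (Pln n x))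
        atTop
        (nhds (∫ ω, (∑ i ∈ Finset.range ((tauR R R1 ω).toNat), f (ω i)) ∂ (Plu x))) :=
  stmt18_general P z r r1 R R1 hR hR1 un u hun hu htv Pln Plu hPln hPlu hEC fn f C hfn hf hbd hfconv
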